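/- For every n ≥ 1 and all q, p : X × A → ℝ, the projected multi-Bellman operator satisfies ‖Π(Hⁿ q) − Π(Hⁿ p)‖_μ ≤ (φ_max² · σ_max / μ_min) · γⁿ · ‖q − p‖_μ; in particular, whenever (φ_max² · σ_max / μ_min) · γⁿ < 1, the map q ↦ Π(Hⁿ q) is a contraction in the μ-norm. -/

import Mathlib

open Finset Matrix

variable {X A : Type*}

noncomputable def bellman [Fintype X] [Fintype A] [Nonempty A]
    (P : X → A → X → ℝ) (r : X × A → ℝ) (γ : ℝ) (q : X × A → ℝ) :
    X × A → ℝ :=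
  fun z => r z + γ * ∑ x' : X, P z.1 z.2 x' *
    Finset.univ.sup' Finset.univ_nonempty (fun a' : A => q (x', a'))

noncomputable def supNorm [Fintype X] [Fintype A] [Nonempty X] [Nonempty A]
    (q : X × A → ℝ) : ℝ :=
  Finset.univ.sup' Finset.univ_nonempty (fun z : X × A => |q z|)

noncomputable def munorm [Fintype X] [Fintype A] (μ q : X × A → ℝ) : ℝ :=
  Real.sqrt (∑ z : X × A, μ z * q z ^ 2)

def qlin {k : ℕ} (φ : X × A → Fin k → ℝ) (ω : Fin k → ℝ) : X × A → ℝ :=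
  fun z => φ z ⬝ᵥ ω

noncomputable def cov [Fintype X] [Fintype A] {k : ℕ}
    (μ : X × A → ℝ) (φ : X × A → Fin k → ℝ) : Matrix (Fin k) (Fin k) ℝ :=
  ∑ z : X × A, μ z • Matrix.vecMulVec (φ z) (φ z)

noncomputable def proj [Fintype X] [Fintype A] {k : ℕ}
    (μ : X × A → ℝ) (φ : X × A → Fin k → ℝ) (q : X × A → ℝ) : X × A → ℝ :=
  fun z => φ z ⬝ᵥ (cov μ φ)⁻¹.mulVec (∑ z' : X × A, (μ z' * q z') • φ z')

noncomputable def enorm2 {k : ℕ} (v : Fin k → ℝ) : ℝ :=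
  Real.sqrt (∑ i, v i ^ 2)

noncomputable def phiMax [Fintype X] [Fintype A] [Nonempty X] [Nonempty A]
    {k : ℕ} (φ : X × A → Fin k → ℝ) : ℝ :=
  Finset.univ.sup' Finset.univ_nonempty (fun z : X × A => enorm2 (φ z))

noncomputable def sigmaMax {k : ℕ} (M : Matrix (Fin k) (Fin k) ℝ) : ℝ :=
  ‖LinearMap.toContinuousLinearMap (Matrix.toEuclideanLin M)‖

noncomputable def gmap [Fintype X] [Fintype A] [Nonempty A] {k : ℕ}
    (P : X → A → X → ℝ) (r : X × A → ℝ) (γ : ℝ)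
    (μ : X × A → ℝ) (φ : X × A → Fin k → ℝ) (n : ℕ) (ω : Fin k → ℝ) :
    Fin k → ℝ :=
  ∑ z : X × A, (μ z * ((bellman P r γ)^[n] (qlin φ ω) z - qlin φ ω z)) • φ z

lemma abs_le_supNorm [Fintype X] [Fintype A] [Nonempty X] [Nonempty A]
    (q : X × A → ℝ) (z : X × A) : |q z| ≤ supNorm q :=
  Finset.le_sup' (fun z : X × A => |q z|) (Finset.mem_univ z)

lemma supNorm_nonneg [Fintype X] [Fintype A] [Nonempty X] [Nonempty A]
    (q : X × A → ℝ) : 0 ≤ supNorm q := by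
  obtain ⟨z⟩ := (inferInstance : Nonempty (X × A))
  exact le_trans (abs_nonneg _) (abs_le_supNorm q z)

lemma supNorm_le [Fintype X] [Fintype A] [Nonempty X] [Nonempty A]
    (q : X × A → ℝ) (c : ℝ) (h : ∀ z, |q z| ≤ c) : supNorm q ≤ c :=
  Finset.sup'_le _ _ fun z _ => h z

lemma abs_sup'_sub_sup'_le {ι : Type*} (s : Finset ι) (hs : s.Nonempty)
    (f g : ι → ℝ) (c : ℝ) (h : ∀ i ∈ s, |f i - g i| ≤ c) :
    |s.sup' hs f - s.sup' hs g| ≤ c := by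
  rw [abs_sub_le_iff]
  constructor
  · rw [sub_le_iff_le_add]
    refine Finset.sup'_le _ _ fun i hi => ?_
    have h1 := (abs_sub_le_iff.mp (h i hi)).1
    have h2 := Finset.le_sup' g hi
    linarith
  · rw [sub_le_iff_le_add]
    refine Finset.sup'_le _ _ fun i hi => ?_
    have h1 := (abs_sub_le_iff.mp (h i hi)).2
    have h2 := Finset.le_sup' f hi
    linarith

lemma bellman_contract [Fintype X] [Fintype A] [Nonempty X] [Nonempty A]
    (P : X → A → X → ℝ) (r : X × A → ℝ) (γ : ℝ) (hγ0 : 0 ≤ γ)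
    (hP0 : ∀ x a x', 0 ≤ P x a x') (hP1 : ∀ x a, ∑ x' : X, P x a x' = 1)
    (q p : X × A → ℝ) :
    supNorm (bellman P r γ q - bellman P r γ p) ≤ γ * supNorm (q - p) := by
  refine supNorm_le _ _ fun z => ?_
  have key : (bellman P r γ q - bellman P r γ p) z =
      γ * ∑ x' : X, P z.1 z.2 x' *
        (Finset.univ.sup' Finset.univ_nonempty (fun a' : A => q (x', a')) -
         Finset.univ.sup' Finset.univ_nonempty (fun a' : A => p (x', a'))) := by
    simp only [Pi.sub_apply, bellman, mul_sub, Finset.sum_sub_distrib]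
    ring
  rw [key, abs_mul, abs_of_nonneg hγ0]
  refine mul_le_mul_of_nonneg_left ?_ hγ0
  calc |∑ x' : X, P z.1 z.2 x' * _| ≤ ∑ x' : X, |P z.1 z.2 x' * _| :=
        Finset.abs_sum_le_sum_abs _ _
    _ ≤ ∑ x' : X, P z.1 z.2 x' * supNorm (q - p) := by
        refine Finset.sum_le_sum fun x' _ => ?_
        rw [abs_mul, abs_of_nonneg (hP0 _ _ _)]
        refine mul_le_mul_of_nonneg_left ?_ (hP0 _ _ _)
        refine abs_sup'_sub_sup'_le _ _ _ _ _ fun a _ => ?_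
        exact abs_le_supNorm (q - p) (x', a)
    _ = supNorm (q - p) := by rw [← Finset.sum_mul, hP1, one_mul]

lemma bellman_iter_contract [Fintype X] [Fintype A] [Nonempty X] [Nonempty A]
    (P : X → A → X → ℝ) (r : X × A → ℝ) (γ : ℝ) (hγ0 : 0 ≤ γ)
    (hP0 : ∀ x a x', 0 ≤ P x a x') (hP1 : ∀ x a, ∑ x' : X, P x a x' = 1)
    (n : ℕ) (q p : X × A → ℝ) :
    supNorm ((bellman P r γ)^[n] q - (bellman P r γ)^[n] p) ≤ γ ^ n * supNorm (q - p) := by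
  induction n with
  | zero => simp
  | succ m ih =>
    rw [Function.iterate_succ_apply', Function.iterate_succ_apply']
    calc supNorm _ ≤ γ * supNorm ((bellman P r γ)^[m] q - (bellman P r γ)^[m] p) :=
          bellman_contract P r γ hγ0 hP0 hP1 _ _
      _ ≤ γ * (γ ^ m * supNorm (q - p)) := mul_le_mul_of_nonneg_left ih hγ0
      _ = γ ^ (m + 1) * supNorm (q - p) := by ring

lemma norm_symm_eq {k : ℕ} (v : Fin k → ℝ) :
    ‖(WithLp.equiv 2 (Fin k → ℝ)).symm v‖ = enorm2 v := by
  rw [EuclideanSpace.norm_eq, enorm2]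
  congr 1
  refine Finset.sum_congr rfl fun i _ => ?_
  show ‖v i‖ ^ 2 = v i ^ 2
  rw [Real.norm_eq_abs, sq_abs]

lemma enorm2_nonneg {k : ℕ} (v : Fin k → ℝ) : 0 ≤ enorm2 v := Real.sqrt_nonneg _

lemma abs_dot_le {k : ℕ} (u v : Fin k → ℝ) : |u ⬝ᵥ v| ≤ enorm2 u * enorm2 v := by
  have h := abs_real_inner_le_norm ((WithLp.equiv 2 (Fin k → ℝ)).symm u)
    ((WithLp.equiv 2 (Fin k → ℝ)).symm v)
  rw [norm_symm_eq, norm_symm_eq] at h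
  refine le_trans (le_of_eq ?_) h
  congr 1
  rw [EuclideanSpace.inner_eq_star_dotProduct, star_trivial]
  exact dotProduct_comm _ _

lemma enorm2_mulVec_le {k : ℕ} (M : Matrix (Fin k) (Fin k) ℝ) (v : Fin k → ℝ) :
    enorm2 (M.mulVec v) ≤ sigmaMax M * enorm2 v := by
  have h := ContinuousLinearMap.le_opNorm
    (LinearMap.toContinuousLinearMap (Matrix.toEuclideanLin M))
    ((WithLp.equiv 2 (Fin k → ℝ)).symm v)
  rw [LinearMap.coe_toContinuousLinearMap'] at h
  rw [WithLp.equiv_symm_apply, Matrix.toEuclideanLin_apply_piLp_toLp, ← WithLp.equiv_symm_apply, norm_symm_eq, norm_symm_eq] at h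
  exact h

lemma enorm2_sum_smul_le {k : ℕ} {ι : Type*} (s : Finset ι) (c : ι → ℝ) (f : ι → Fin k → ℝ) :
    enorm2 (∑ i ∈ s, c i • f i) ≤ ∑ i ∈ s, |c i| * enorm2 (f i) := by
  have key : (WithLp.equiv 2 (Fin k → ℝ)).symm (∑ i ∈ s, c i • f i) =
      ∑ i ∈ s, c i • (WithLp.equiv 2 (Fin k → ℝ)).symm (f i) := by
    simp only [WithLp.equiv_symm_apply, WithLp.toLp_sum, WithLp.toLp_smul]
  rw [← norm_symm_eq, key]
  refine le_trans (norm_sum_le _ _) ?_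
  refine Finset.sum_le_sum fun i _ => ?_
  rw [norm_smul, Real.norm_eq_abs, norm_symm_eq]

lemma munorm_le_of_forall [Fintype X] [Fintype A] (μ f : X × A → ℝ) (c : ℝ)
    (hμ0 : ∀ z, 0 ≤ μ z) (hμ1 : ∑ z : X × A, μ z = 1) (hc : 0 ≤ c)
    (h : ∀ z, |f z| ≤ c) : munorm μ f ≤ c := by
  rw [munorm]
  have : ∑ z : X × A, μ z * f z ^ 2 ≤ c ^ 2 := by
    calc ∑ z : X × A, μ z * f z ^ 2 ≤ ∑ z : X × A, μ z * c ^ 2 := by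
          refine Finset.sum_le_sum fun z _ => ?_
          refine mul_le_mul_of_nonneg_left ?_ (hμ0 z)
          calc f z ^ 2 = |f z| ^ 2 := (sq_abs _).symm
            _ ≤ c ^ 2 := pow_le_pow_left₀ (abs_nonneg _) (h z) 2
      _ = c ^ 2 := by rw [← Finset.sum_mul, hμ1, one_mul]
  calc Real.sqrt (∑ z : X × A, μ z * f z ^ 2) ≤ Real.sqrt (c ^ 2) := Real.sqrt_le_sqrt this
    _ = c := Real.sqrt_sq hc

lemma munorm_nonneg [Fintype X] [Fintype A] (μ f : X × A → ℝ) : 0 ≤ munorm μ f :=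
  Real.sqrt_nonneg _

lemma supNorm_le_munorm_div [Fintype X] [Fintype A] [Nonempty X] [Nonempty A]
    (μ f : X × A → ℝ) (μmin : ℝ) (hμmin : 0 < μmin) (hμ : ∀ z, μmin ≤ μ z) :
    supNorm f ≤ munorm μ f / Real.sqrt μmin := by
  refine supNorm_le _ _ fun z => ?_
  have hterm : μmin * f z ^ 2 ≤ ∑ z' : X × A, μ z' * f z' ^ 2 := by
    have h1 : μmin * f z ^ 2 ≤ μ z * f z ^ 2 :=
      mul_le_mul_of_nonneg_right (hμ z) (sq_nonneg _)
    have h2 : μ z * f z ^ 2 ≤ ∑ z' : X × A, μ z' * f z' ^ 2 :=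
      Finset.single_le_sum (f := fun z' : X × A => μ z' * f z' ^ 2)
        (fun z' _ => mul_nonneg (le_trans hμmin.le (hμ z')) (sq_nonneg _)) (Finset.mem_univ z)
    linarith
  have h2 : f z ^ 2 ≤ (∑ z' : X × A, μ z' * f z' ^ 2) / μmin := by
    rw [le_div_iff₀ hμmin]; linarith
  calc |f z| = Real.sqrt (f z ^ 2) := (Real.sqrt_sq_eq_abs _).symm
    _ ≤ Real.sqrt ((∑ z' : X × A, μ z' * f z' ^ 2) / μmin) := Real.sqrt_le_sqrt h2
    _ = munorm μ f / Real.sqrt μmin := by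
        rw [Real.sqrt_div' _ hμmin.le, munorm]

lemma proj_sub_eq [Fintype X] [Fintype A] {k : ℕ}
    (μ : X × A → ℝ) (φ : X × A → Fin k → ℝ) (q p : X × A → ℝ) (z : X × A) :
    (proj μ φ q - proj μ φ p) z =
      φ z ⬝ᵥ (cov μ φ)⁻¹.mulVec (∑ z' : X × A, (μ z' * (q z' - p z')) • φ z') := by
  simp only [Pi.sub_apply, proj]
  have hS : ((∑ z' : X × A, (μ z' * q z') • φ z') - ∑ z' : X × A, (μ z' * p z') • φ z') =
      ∑ z' : X × A, (μ z' * (q z' - p z')) • φ z' := by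
    rw [← Finset.sum_sub_distrib]
    refine Finset.sum_congr rfl fun z' _ => ?_
    rw [← sub_smul, ← mul_sub]
  rw [← dotProduct_sub, ← Matrix.mulVec_sub, hS]

lemma phiMax_nonneg [Fintype X] [Fintype A] [Nonempty X] [Nonempty A] {k : ℕ}
    (φ : X × A → Fin k → ℝ) : 0 ≤ phiMax φ := by
  obtain ⟨z⟩ := (inferInstance : Nonempty (X × A))
  exact le_trans (enorm2_nonneg (φ z))
    (Finset.le_sup' (fun z : X × A => enorm2 (φ z)) (Finset.mem_univ z))

lemma enorm2_le_phiMax [Fintype X] [Fintype A] [Nonempty X] [Nonempty A] {k : ℕ}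
    (φ : X × A → Fin k → ℝ) (z : X × A) : enorm2 (φ z) ≤ phiMax φ :=
  Finset.le_sup' (fun z : X × A => enorm2 (φ z)) (Finset.mem_univ z)

lemma proj_sub_pointwise [Fintype X] [Fintype A] [Nonempty X] [Nonempty A] {k : ℕ}
    (μ : X × A → ℝ) (φ : X × A → Fin k → ℝ) (μmin : ℝ) (hμmin : 0 < μmin)
    (hμ : ∀ z, μmin ≤ μ z) (hμ1 : ∑ z : X × A, μ z = 1)
    (q p : X × A → ℝ) (z : X × A) :
    |(proj μ φ q - proj μ φ p) z| ≤
      phiMax φ ^ 2 * sigmaMax (cov μ φ)⁻¹ * supNorm (q - p) := by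
  rw [proj_sub_eq]
  set v := ∑ z' : X × A, (μ z' * (q z' - p z')) • φ z' with hv
  have hvbound : enorm2 v ≤ phiMax φ * supNorm (q - p) := by
    refine le_trans (enorm2_sum_smul_le _ _ _) ?_
    calc ∑ z' : X × A, |μ z' * (q z' - p z')| * enorm2 (φ z')
        ≤ ∑ z' : X × A, μ z' * supNorm (q - p) * phiMax φ := by
          refine Finset.sum_le_sum fun z' _ => ?_
          refine mul_le_mul ?_ (enorm2_le_phiMax φ z') (enorm2_nonneg _) ?_
          · rw [abs_mul, abs_of_nonneg (le_trans hμmin.le (hμ z'))]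
            exact mul_le_mul_of_nonneg_left (abs_le_supNorm (q - p) z')
              (le_trans hμmin.le (hμ z'))
          · exact mul_nonneg (le_trans hμmin.le (hμ z')) (supNorm_nonneg _)
      _ = phiMax φ * supNorm (q - p) := by
          rw [← Finset.sum_mul, ← Finset.sum_mul, hμ1]; ring
  have hmv : enorm2 ((cov μ φ)⁻¹.mulVec v) ≤ sigmaMax (cov μ φ)⁻¹ * enorm2 v :=
    enorm2_mulVec_le _ _
  have hσ : 0 ≤ sigmaMax (cov μ φ)⁻¹ := norm_nonneg _
  calc |φ z ⬝ᵥ (cov μ φ)⁻¹.mulVec v| ≤ enorm2 (φ z) * enorm2 ((cov μ φ)⁻¹.mulVec v) :=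
        abs_dot_le _ _
    _ ≤ phiMax φ * (sigmaMax (cov μ φ)⁻¹ * (phiMax φ * supNorm (q - p))) := by
        refine mul_le_mul (enorm2_le_phiMax φ z)
          (le_trans hmv (mul_le_mul_of_nonneg_left hvbound hσ))
          (enorm2_nonneg _) (phiMax_nonneg φ)
    _ = phiMax φ ^ 2 * sigmaMax (cov μ φ)⁻¹ * supNorm (q - p) := by ring

theorem projected_multiBellman_contraction
    [Fintype X] [Fintype A] [Nonempty X] [Nonempty A] {k : ℕ}
    (P : X → A → X → ℝ) (r : X × A → ℝ) (γ : ℝ)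
    (hγ0 : 0 ≤ γ) (hγ1 : γ < 1)
    (hP0 : ∀ x a x', 0 ≤ P x a x') (hP1 : ∀ x a, ∑ x' : X, P x a x' = 1)
    (φ : X × A → Fin k → ℝ) (μ : X × A → ℝ) (μmin : ℝ)
    (hμmin : 0 < μmin) (hμ : ∀ z, μmin ≤ μ z) (hμ1 : ∑ z : X × A, μ z = 1)
    (hSig : IsUnit (cov μ φ).det)
    (n : ℕ) (hn : 1 ≤ n) :
    (∀ q p : X × A → ℝ,
      munorm μ (proj μ φ ((bellman P r γ)^[n] q) - proj μ φ ((bellman P r γ)^[n] p)) ≤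
        (phiMax φ ^ 2 * sigmaMax (cov μ φ)⁻¹ / μmin) * γ ^ n * munorm μ (q - p)) ∧
    ((phiMax φ ^ 2 * sigmaMax (cov μ φ)⁻¹ / μmin) * γ ^ n < 1 →
      ∃ L : ℝ, L < 1 ∧ ∀ q p : X × A → ℝ,
        munorm μ (proj μ φ ((bellman P r γ)^[n] q) - proj μ φ ((bellman P r γ)^[n] p)) ≤
          L * munorm μ (q - p)) := by
  have key : ∀ q p : X × A → ℝ,
      munorm μ (proj μ φ ((bellman P r γ)^[n] q) - proj μ φ ((bellman P r γ)^[n] p)) ≤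
        (phiMax φ ^ 2 * sigmaMax (cov μ φ)⁻¹ / μmin) * γ ^ n * munorm μ (q - p) := by
    intro q p
    set C := phiMax φ ^ 2 * sigmaMax (cov μ φ)⁻¹ with hCdef
    have hC : 0 ≤ C := mul_nonneg (sq_nonneg _) (norm_nonneg _)
    have hμ0 : ∀ z, 0 ≤ μ z := fun z => hμmin.le.trans (hμ z)
    have step1 : munorm μ (proj μ φ ((bellman P r γ)^[n] q) - proj μ φ ((bellman P r γ)^[n] p)) ≤
        C * supNorm ((bellman P r γ)^[n] q - (bellman P r γ)^[n] p) :=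
      munorm_le_of_forall _ _ _ hμ0 hμ1 (mul_nonneg hC (supNorm_nonneg _))
        (fun z => proj_sub_pointwise μ φ μmin hμmin hμ hμ1 _ _ z)
    have step2 : supNorm ((bellman P r γ)^[n] q - (bellman P r γ)^[n] p) ≤
        γ ^ n * supNorm (q - p) := bellman_iter_contract P r γ hγ0 hP0 hP1 n q p
    have step3 : supNorm (q - p) ≤ munorm μ (q - p) / Real.sqrt μmin :=
      supNorm_le_munorm_div μ _ μmin hμmin hμ
    have hμmin1 : μmin ≤ 1 := by
      obtain ⟨z⟩ := (inferInstance : Nonempty (X × A))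
      have hsum : μ z ≤ 1 := by
        rw [← hμ1]
        exact Finset.single_le_sum (fun z' _ => hμ0 z') (Finset.mem_univ z)
      linarith [hμ z]
    have hsq : μmin ≤ Real.sqrt μmin := by
      calc μmin = Real.sqrt (μmin ^ 2) := (Real.sqrt_sq hμmin.le).symm
        _ ≤ Real.sqrt μmin := Real.sqrt_le_sqrt (by nlinarith)
    have hγn : 0 ≤ γ ^ n := pow_nonneg hγ0 n
    have hm : 0 ≤ munorm μ (q - p) := munorm_nonneg _ _
    calc munorm μ (proj μ φ ((bellman P r γ)^[n] q) - proj μ φ ((bellman P r γ)^[n] p))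
        ≤ C * supNorm ((bellman P r γ)^[n] q - (bellman P r γ)^[n] p) := step1
      _ ≤ C * (γ ^ n * supNorm (q - p)) := mul_le_mul_of_nonneg_left step2 hC
      _ ≤ C * (γ ^ n * (munorm μ (q - p) / Real.sqrt μmin)) :=
          mul_le_mul_of_nonneg_left (mul_le_mul_of_nonneg_left step3 hγn) hC
      _ = (C * γ ^ n * munorm μ (q - p)) / Real.sqrt μmin := by ring
      _ ≤ (C * γ ^ n * munorm μ (q - p)) / μmin :=
          div_le_div_of_nonneg_left (mul_nonneg (mul_nonneg hC hγn) hm) hμmin hsq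
      _ = (C / μmin) * γ ^ n * munorm μ (q - p) := by ring
  exact ⟨key, fun hL => ⟨_, hL, key⟩⟩
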